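/- Let m ≥ 1 be an integer, κ ∈ ℝ, T > 0, and R > 0 with 2·√κ·R < π when κ > 0. Define η : (0,R) → ℝ by η(r) = (sn_κ(r)^{2m−2}·sn_{4κ}(r))^{1/(2m−1)}, and let s : [0,R) → ℝ be the antiderivative s(r) = ∫₀^r η(ρ) dρ. Let φ : ℝ × ℝ → ℝ be C^∞ on an open set containing {(s(r), t) : r ∈ (0,R), t ∈ (0,T)}, and suppose ∂ₜφ(s(r),t) = η(r)²·∂ₛ²φ(s(r),t) + 2m·η'(r)·∂ₛφ(s(r),t) for all (r,t) ∈ (0,R) × (0,T). Then for all (r,t) ∈ (0,R) × (0,T): ∂ₜ∂ₛφ(s(r),t) = η(r)²·∂ₛ³φ(s(r),t) + (2m+2)·η'(r)·∂ₛ²φ(s(r),t) − (2m/(2m−1))·( (2m+2)·κ + ((2m−2)/(2m−1))·( sn_κ'(r)/sn_κ(r) − sn_{4κ}'(r)/sn_{4κ}(r) )² )·∂ₛφ(s(r),t). -/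

import Mathlib

open Set Filter

/-- The generalized sine function `sn_κ` of the simply connected space form
of constant sectional curvature `κ`. -/
noncomputable def sn (κ : ℝ) : ℝ → ℝ := fun r =>
  if 0 < κ then Real.sin (Real.sqrt κ * r) / Real.sqrt κ
  else if κ = 0 then r
  else Real.sinh (Real.sqrt (-κ) * r) / Real.sqrt (-κ)

/-- The reparametrizing variable `s_κ(r)`, an antiderivative of `sn_κ`. -/
noncomputable def sVar (κ : ℝ) : ℝ → ℝ := fun r =>
  if 0 < κ then (1 - Real.cos (Real.sqrt κ * r)) / κ
  else if κ = 0 then r ^ 2 / 2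
  else (Real.cosh (Real.sqrt (-κ) * r) - 1) / (-κ)

/-- Partial derivative of a function of two real variables in its first argument. -/
noncomputable def dS (φ : ℝ → ℝ → ℝ) : ℝ → ℝ → ℝ := fun s t => deriv (fun x => φ x t) s

/-- Partial derivative of a function of two real variables in its second argument. -/
noncomputable def dT (φ : ℝ → ℝ → ℝ) : ℝ → ℝ → ℝ := fun s t => deriv (fun τ => φ s τ) t

/-- The coefficient function `η(r) = (sn_κ(r)^{2m-2} sn_{4κ}(r))^{1/(2m-1)}` of the
Kähler model space of complex dimension `m` and holomorphic sectional curvature `4κ`. -/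
noncomputable def eta (κ : ℝ) (m : ℕ) : ℝ → ℝ := fun r =>
  (sn κ r ^ (2 * m - 2) * sn (4 * κ) r) ^ ((1 : ℝ) / (2 * (m : ℝ) - 1))

/-- The antiderivative `s(r) = ∫₀^r η`. -/
noncomputable def sEta (κ : ℝ) (m : ℕ) : ℝ → ℝ := fun r => ∫ ρ in (0:ℝ)..r, eta κ m ρ


noncomputable def cs (κ : ℝ) : ℝ → ℝ := fun r =>
  if 0 < κ then Real.cos (Real.sqrt κ * r)
  else if κ = 0 then 1
  else Real.cosh (Real.sqrt (-κ) * r)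

lemma hasDerivAt_sn (κ r : ℝ) : HasDerivAt (sn κ) (cs κ r) r := by
  unfold sn cs
  rcases lt_trichotomy 0 κ with hκ | hκ | hκ
  · simp only [if_pos hκ]
    have h0 : Real.sqrt κ ≠ 0 := ne_of_gt (Real.sqrt_pos.mpr hκ)
    have h1 : HasDerivAt (fun x : ℝ => Real.sqrt κ * x) (Real.sqrt κ) r := by
      simpa using (hasDerivAt_id r).const_mul (Real.sqrt κ)
    have h2 := ((Real.hasDerivAt_sin (Real.sqrt κ * r)).comp r h1).div_const (Real.sqrt κ)
    refine h2.congr_deriv ?_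
    symm
    field_simp
  · simp only [if_neg (by linarith : ¬ 0 < κ), if_pos hκ.symm]
    simpa using hasDerivAt_id' r
  · have hκ' : ¬ 0 < κ := by linarith
    have hκ'' : κ ≠ 0 := ne_of_lt hκ
    simp only [if_neg hκ', if_neg hκ'']
    have h0 : Real.sqrt (-κ) ≠ 0 := ne_of_gt (Real.sqrt_pos.mpr (by linarith))
    have h1 : HasDerivAt (fun x : ℝ => Real.sqrt (-κ) * x) (Real.sqrt (-κ)) r := by
      simpa using (hasDerivAt_id r).const_mul (Real.sqrt (-κ))
    have h2 := ((Real.hasDerivAt_sinh (Real.sqrt (-κ) * r)).comp r h1).div_const (Real.sqrt (-κ))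
    refine h2.congr_deriv ?_
    symm
    field_simp

lemma hasDerivAt_cs (κ r : ℝ) : HasDerivAt (cs κ) (-κ * sn κ r) r := by
  unfold sn cs
  rcases lt_trichotomy 0 κ with hκ | hκ | hκ
  · simp only [if_pos hκ]
    have h0 : Real.sqrt κ ≠ 0 := ne_of_gt (Real.sqrt_pos.mpr hκ)
    have hsq : Real.sqrt κ * Real.sqrt κ = κ := Real.mul_self_sqrt hκ.le
    have h1 : HasDerivAt (fun x : ℝ => Real.sqrt κ * x) (Real.sqrt κ) r := by
      simpa using (hasDerivAt_id r).const_mul (Real.sqrt κ)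
    have h2 := (Real.hasDerivAt_cos (Real.sqrt κ * r)).comp r h1
    refine h2.congr_deriv ?_
    symm
    field_simp
    linear_combination Real.sin (Real.sqrt κ * r) * hsq
  · simp only [if_neg (by linarith : ¬ 0 < κ), if_pos hκ.symm]
    simpa [← hκ] using hasDerivAt_const r (1:ℝ)
  · have hκ' : ¬ 0 < κ := by linarith
    have hκ'' : κ ≠ 0 := ne_of_lt hκ
    simp only [if_neg hκ', if_neg hκ'']
    have h0 : Real.sqrt (-κ) ≠ 0 := ne_of_gt (Real.sqrt_pos.mpr (by linarith))
    have h1 : HasDerivAt (fun x : ℝ => Real.sqrt (-κ) * x) (Real.sqrt (-κ)) r := by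
      simpa using (hasDerivAt_id r).const_mul (Real.sqrt (-κ))
    have h2 := (Real.hasDerivAt_cosh (Real.sqrt (-κ) * r)).comp r h1
    refine h2.congr_deriv ?_
    symm
    have hsq : Real.sqrt (-κ) * Real.sqrt (-κ) = -κ := Real.mul_self_sqrt (by linarith)
    field_simp
    linear_combination -Real.sinh (Real.sqrt (-κ) * r) * hsq

lemma sn_pos {κ r : ℝ} (hr : 0 < r) (h : 0 < κ → Real.sqrt κ * r < Real.pi) : 0 < sn κ r := by
  unfold sn
  rcases lt_trichotomy 0 κ with hκ | hκ | hκ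
  · simp only [if_pos hκ]
    exact div_pos (Real.sin_pos_of_pos_of_lt_pi (mul_pos (Real.sqrt_pos.mpr hκ) hr) (h hκ))
      (Real.sqrt_pos.mpr hκ)
  · simp [if_neg (by linarith : ¬ 0 < κ), if_pos hκ.symm, hr]
  · have hκ' : ¬ 0 < κ := by linarith
    simp only [if_neg hκ', if_neg (ne_of_lt hκ)]
    exact div_pos (Real.sinh_pos_iff.mpr (mul_pos (Real.sqrt_pos.mpr (by linarith)) hr))
      (Real.sqrt_pos.mpr (by linarith))

lemma continuous_sn (κ : ℝ) : Continuous (sn κ) := by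
  unfold sn
  split_ifs
  · exact (Real.continuous_sin.comp (continuous_const.mul continuous_id)).div_const _
  · exact continuous_id
  · exact (Real.continuous_sinh.comp (continuous_const.mul continuous_id)).div_const _

noncomputable def etaLog (κ : ℝ) (m : ℕ) : ℝ → ℝ := fun r =>
  (1 / (2 * (m : ℝ) - 1)) *
    ((2 * (m : ℝ) - 2) * (cs κ r / sn κ r) + cs (4 * κ) r / sn (4 * κ) r)

lemma continuous_eta (κ : ℝ) (m : ℕ) (hm : 1 ≤ m) : Continuous (eta κ m) := by
  have h1m : (1:ℝ) ≤ (m:ℝ) := by exact_mod_cast hm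
  have hpos : (0:ℝ) < 2 * (m : ℝ) - 1 := by linarith
  have hn : (0:ℝ) ≤ 1 / (2 * (m : ℝ) - 1) := by positivity
  have hg : Continuous (fun r => sn κ r ^ (2 * m - 2) * sn (4 * κ) r) :=
    ((continuous_sn κ).pow _).mul (continuous_sn (4 * κ))
  exact continuous_iff_continuousAt.mpr fun x =>
    (Real.continuousAt_rpow_const _ _ (Or.inr hn)).comp hg.continuousAt

lemma hasDerivAt_sEta (κ : ℝ) (m : ℕ) (hm : 1 ≤ m) (r : ℝ) :
    HasDerivAt (sEta κ m) (eta κ m r) r :=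
  ((continuous_eta κ m hm).integral_hasStrictDerivAt 0 r).hasDerivAt

lemma eta_pos (κ : ℝ) (m : ℕ) {r : ℝ} (h1 : 0 < sn κ r) (h2 : 0 < sn (4 * κ) r) :
    0 < eta κ m r :=
  Real.rpow_pos_of_pos (mul_pos (pow_pos h1 _) h2) _

lemma hasDerivAt_eta (κ : ℝ) (m : ℕ) (hm : 1 ≤ m) {r : ℝ}
    (h1 : 0 < sn κ r) (h2 : 0 < sn (4 * κ) r) :
    HasDerivAt (eta κ m) (eta κ m r * etaLog κ m r) r := by
  obtain ⟨k, rfl⟩ : ∃ k, m = k + 1 := ⟨m - 1, by omega⟩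
  set g : ℝ → ℝ := fun x => sn κ x ^ (2 * (k+1) - 2) * sn (4 * κ) x with hgdef
  have hg : HasDerivAt g
      (((2 * (k+1) - 2 : ℕ) : ℝ) * sn κ r ^ (2 * (k+1) - 2 - 1) * cs κ r * sn (4 * κ) r
        + sn κ r ^ (2 * (k+1) - 2) * cs (4 * κ) r) r :=
    ((hasDerivAt_sn κ r).pow _).mul (hasDerivAt_sn (4 * κ) r)
  have hgpos : 0 < g r := mul_pos (pow_pos h1 _) h2
  have heta := hg.rpow_const (p := (1 : ℝ) / (2 * ((k+1:ℕ) : ℝ) - 1)) (Or.inl hgpos.ne')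
  refine heta.congr_deriv ?_
  symm
  rw [Real.rpow_sub_one hgpos.ne']
  show g r ^ _ * etaLog κ (k+1) r = _
  have hgd : (((2 * (k+1) - 2 : ℕ) : ℝ) * sn κ r ^ (2 * (k+1) - 2 - 1) * cs κ r * sn (4 * κ) r
        + sn κ r ^ (2 * (k+1) - 2) * cs (4 * κ) r)
      = g r * ((2 * (((k+1) : ℕ) : ℝ) - 2) * (cs κ r / sn κ r) + cs (4 * κ) r / sn (4 * κ) r) := by
    rw [hgdef]
    rcases Nat.eq_zero_or_pos k with rfl | hk
    · norm_num
      field_simp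
    · obtain ⟨j, rfl⟩ : ∃ j, k = j + 1 := ⟨k - 1, by omega⟩
      simp only [show 2 * (j+1+1) - 2 = 2*j + 2 from by omega,
        show 2 * (j+1+1) - 2 - 1 = 2*j + 1 from by omega]
      push_cast
      field_simp
      ring
  rw [hgd]
  unfold etaLog
  have hn0 : (0:ℝ) < 2 * (((k+1) : ℕ) : ℝ) - 1 := by
    have : (0:ℝ) ≤ (k:ℝ) := Nat.cast_nonneg k
    push_cast
    linarith
  have h0 : g r ≠ 0 := hgpos.ne'
  generalize hGc : g r ^ ((1:ℝ) / (2 * (((k+1):ℕ) : ℝ) - 1)) = Gc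
  generalize hG : g r = G at h0 ⊢
  generalize hP : (2 * (((k+1):ℕ) : ℝ) - 2) * (cs κ r / sn κ r)
      + cs (4 * κ) r / sn (4 * κ) r = P
  apply mul_right_cancel₀ h0
  rw [mul_assoc (G * P * (1 / (2 * (((k+1):ℕ) : ℝ) - 1))) (Gc / G) G,
    div_mul_cancel₀ _ h0]
  ring

lemma hasDerivAt_etaLog (κ : ℝ) (m : ℕ) {r : ℝ}
    (h1 : 0 < sn κ r) (h2 : 0 < sn (4 * κ) r) :
    HasDerivAt (etaLog κ m)
      ((1 / (2 * (m : ℝ) - 1)) *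
        ((2 * (m : ℝ) - 2) * (-κ - (cs κ r / sn κ r) ^ 2)
          + (-(4 * κ) - (cs (4 * κ) r / sn (4 * κ) r) ^ 2))) r := by
  have hQ : HasDerivAt (fun x => cs κ x / sn κ x)
      ((-κ * sn κ r * sn κ r - cs κ r * cs κ r) / sn κ r ^ 2) r :=
    (hasDerivAt_cs κ r).div (hasDerivAt_sn κ r) h1.ne'
  have hB : HasDerivAt (fun x => cs (4 * κ) x / sn (4 * κ) x)
      ((-(4 * κ) * sn (4 * κ) r * sn (4 * κ) r - cs (4 * κ) r * cs (4 * κ) r)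
        / sn (4 * κ) r ^ 2) r :=
    (hasDerivAt_cs (4 * κ) r).div (hasDerivAt_sn (4 * κ) r) h2.ne'
  have := ((hQ.const_mul (2 * (m : ℝ) - 2)).add hB).const_mul (1 / (2 * (m : ℝ) - 1))
  refine this.congr_deriv ?_
  symm
  have h2' := h2.ne'
  generalize sn (4 * κ) r = S at h2' ⊢
  field_simp

lemma slice_fst {f : ℝ × ℝ → ℝ} {a b : ℝ} (hf : DifferentiableAt ℝ f (a, b)) :
    HasDerivAt (fun x => f (x, b)) (fderiv ℝ f (a, b) (1, 0)) a :=
  hf.hasFDerivAt.comp_hasDerivAt a ((hasDerivAt_id a).prodMk (hasDerivAt_const a b))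

lemma slice_snd {f : ℝ × ℝ → ℝ} {a b : ℝ} (hf : DifferentiableAt ℝ f (a, b)) :
    HasDerivAt (fun τ => f (a, τ)) (fderiv ℝ f (a, b) (0, 1)) b :=
  hf.hasFDerivAt.comp_hasDerivAt b ((hasDerivAt_const b a).prodMk (hasDerivAt_id b))

lemma curve_deriv {f : ℝ × ℝ → ℝ} {c : ℝ → ℝ} {r t c' : ℝ}
    (hf : DifferentiableAt ℝ f (c r, t)) (hc : HasDerivAt c c' r) :
    HasDerivAt (fun x => f (c x, t)) (c' * fderiv ℝ f (c r, t) (1, 0)) r := by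
  have h := hf.hasFDerivAt.comp_hasDerivAt r (hc.prodMk (hasDerivAt_const r t))
  refine h.congr_deriv ?_
  symm
  have hv : ((c', 0) : ℝ × ℝ) = c' • ((1 : ℝ), (0 : ℝ)) := by simp
  rw [hv, map_smul, smul_eq_mul]

lemma fderiv_clm_apply_eq {f : ℝ × ℝ → (ℝ × ℝ →L[ℝ] ℝ)} {q : ℝ × ℝ}
    (hf : DifferentiableAt ℝ f q) (v w : ℝ × ℝ) :
    fderiv ℝ (fun p => f p v) q w = fderiv ℝ f q w v := by
  have h : HasFDerivAt (fun p => f p v)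
      ((ContinuousLinearMap.apply ℝ ℝ v).comp (fderiv ℝ f q)) q :=
    (ContinuousLinearMap.apply ℝ ℝ v).hasFDerivAt.comp q hf.hasFDerivAt
  rw [h.fderiv]
  rfl

/-- differentiating the transformed radial heat equation of the Kähler
model space once in `s`. -/
theorem stmt12 (m : ℕ) (hm : 1 ≤ m) (κ T R : ℝ) (hT : 0 < T) (hR : 0 < R)
    (hκR : 0 < κ → 2 * Real.sqrt κ * R < Real.pi)
    (φ : ℝ → ℝ → ℝ) (U : Set (ℝ × ℝ)) (hU : IsOpen U)
    (hmem : ∀ r ∈ Set.Ioo (0:ℝ) R, ∀ t ∈ Set.Ioo (0:ℝ) T, (sEta κ m r, t) ∈ U)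
    (hφ : ContDiffOn ℝ (⊤ : ℕ∞) (fun p : ℝ × ℝ => φ p.1 p.2) U)
    (hheat : ∀ r ∈ Set.Ioo (0:ℝ) R, ∀ t ∈ Set.Ioo (0:ℝ) T,
      dT φ (sEta κ m r) t
        = (eta κ m r) ^ 2 * dS (dS φ) (sEta κ m r) t
          + 2 * (m : ℝ) * deriv (eta κ m) r * dS φ (sEta κ m r) t) :
    ∀ r ∈ Set.Ioo (0:ℝ) R, ∀ t ∈ Set.Ioo (0:ℝ) T,
      dT (dS φ) (sEta κ m r) t
        = (eta κ m r) ^ 2 * dS (dS (dS φ)) (sEta κ m r) t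
          + (2 * (m : ℝ) + 2) * deriv (eta κ m) r * dS (dS φ) (sEta κ m r) t
          - (2 * (m : ℝ) / (2 * (m : ℝ) - 1))
              * ((2 * (m : ℝ) + 2) * κ
                + ((2 * (m : ℝ) - 2) / (2 * (m : ℝ) - 1))
                    * (deriv (sn κ) r / sn κ r - deriv (sn (4 * κ)) r / sn (4 * κ) r) ^ 2)
              * dS φ (sEta κ m r) t := by
  intro r hr t ht
  set Φ : ℝ × ℝ → ℝ := fun p => φ p.1 p.2 with hΦ
  -- positivity of sn on Ioo 0 R
  have hsnpos : ∀ r' ∈ Set.Ioo (0:ℝ) R, 0 < sn κ r' ∧ 0 < sn (4 * κ) r' := by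
    intro r' hr'
    have h4 : Real.sqrt (4 * κ) = 2 * Real.sqrt κ := by
      rw [show (4:ℝ) * κ = 2 ^ 2 * κ by norm_num, Real.sqrt_mul (by positivity) κ,
        Real.sqrt_sq (by norm_num : (0:ℝ) ≤ 2)]
    constructor
    · refine sn_pos hr'.1 fun hκ => ?_
      have h1 : Real.sqrt κ * r' ≤ 2 * Real.sqrt κ * r' := by
        have := Real.sqrt_nonneg κ
        nlinarith [hr'.1]
      have h2 : 2 * Real.sqrt κ * r' < 2 * Real.sqrt κ * R := by
        have hs := Real.sqrt_pos.mpr hκ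
        nlinarith [hr'.2]
      linarith [hκR hκ]
    · refine sn_pos hr'.1 fun hκ4 => ?_
      have hκ : 0 < κ := by linarith
      rw [h4]
      have h2 : 2 * Real.sqrt κ * r' < 2 * Real.sqrt κ * R := by
        have hs := Real.sqrt_pos.mpr hκ
        nlinarith [hr'.2]
      linarith [hκR hκ]
  -- smoothness of Φ at points of U
  have hsm : ∀ p ∈ U, ContDiffAt ℝ (⊤ : ℕ∞) Φ p := fun p hp => hφ.contDiffAt (hU.mem_nhds hp)
  set F1 : ℝ × ℝ → ℝ := fun p => fderiv ℝ Φ p (1, 0) with hF1def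
  set G1 : ℝ × ℝ → ℝ := fun p => fderiv ℝ Φ p (0, 1) with hG1def
  set F2 : ℝ × ℝ → ℝ := fun p => fderiv ℝ F1 p (1, 0) with hF2def
  set F3 : ℝ × ℝ → ℝ := fun p => fderiv ℝ F2 p (1, 0) with hF3def
  have hfdsm : ∀ p ∈ U, ∀ k : ℕ, ContDiffAt ℝ k (fderiv ℝ Φ) p :=
    fun p hp k => (hsm p hp).fderiv_right (by exact_mod_cast le_top)
  have hF1sm : ∀ p ∈ U, ∀ k : ℕ, ContDiffAt ℝ k F1 p :=
    fun p hp k => (hfdsm p hp k).clm_apply contDiffAt_const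
  have hG1sm : ∀ p ∈ U, ∀ k : ℕ, ContDiffAt ℝ k G1 p :=
    fun p hp k => (hfdsm p hp k).clm_apply contDiffAt_const
  have hF2sm : ∀ p ∈ U, ∀ k : ℕ, ContDiffAt ℝ k F2 p := by
    intro p hp k
    have hloc : ∀ᶠ x in nhds p, x ∈ U := hU.eventually_mem hp
    have : ContDiffAt ℝ (k + 1 : ℕ) F1 p := hF1sm p hp (k + 1)
    exact ((this.fderiv_right (m := k) (by exact_mod_cast le_rfl)).clm_apply contDiffAt_const :)
  have hΦdiff : ∀ p ∈ U, DifferentiableAt ℝ Φ p :=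
    fun p hp => ((hsm p hp).of_le (by simp) : ContDiffAt ℝ 1 Φ p).differentiableAt (by simp)
  have hF1diff : ∀ p ∈ U, DifferentiableAt ℝ F1 p :=
    fun p hp => (hF1sm p hp 1).differentiableAt (by simp)
  have hG1diff : ∀ p ∈ U, DifferentiableAt ℝ G1 p :=
    fun p hp => (hG1sm p hp 1).differentiableAt (by simp)
  have hF2diff : ∀ p ∈ U, DifferentiableAt ℝ F2 p :=
    fun p hp => (hF2sm p hp 1).differentiableAt (by simp)
  have hfddiff : ∀ p ∈ U, DifferentiableAt ℝ (fderiv ℝ Φ) p :=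
    fun p hp => (hfdsm p hp 1).differentiableAt (by simp)
  have hF1diff' : ∀ p ∈ U, DifferentiableAt ℝ (fderiv ℝ F1) p := by
    intro p hp
    have : ContDiffAt ℝ (2:ℕ) F1 p := hF1sm p hp 2
    exact (this.fderiv_right (m := (1:ℕ)) (by exact_mod_cast le_rfl)).differentiableAt (by simp)
  -- bridging lemmas
  have hdS : ∀ a b : ℝ, (a, b) ∈ U → dS φ a b = F1 (a, b) :=
    fun a b hab => (slice_fst (hΦdiff _ hab)).deriv
  have hdT : ∀ a b : ℝ, (a, b) ∈ U → dT φ a b = G1 (a, b) :=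
    fun a b hab => (slice_snd (hΦdiff _ hab)).deriv
  have hnearS : ∀ a b : ℝ, (a, b) ∈ U →
      (fun x => dS φ x b) =ᶠ[nhds a] (fun x => F1 (x, b)) := by
    intro a b hab
    have hopen : IsOpen {x : ℝ | (x, b) ∈ U} := hU.preimage (Continuous.prodMk_left b)
    filter_upwards [hopen.eventually_mem hab] with x hx using hdS x b hx
  have hdSS : ∀ a b : ℝ, (a, b) ∈ U → dS (dS φ) a b = F2 (a, b) := by
    intro a b hab
    have h1 : dS (dS φ) a b = deriv (fun x => F1 (x, b)) a :=
      Filter.EventuallyEq.deriv_eq (hnearS a b hab)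
    rw [h1]
    exact (slice_fst (hF1diff _ hab)).deriv
  have hnearSS : ∀ a b : ℝ, (a, b) ∈ U →
      (fun x => dS (dS φ) x b) =ᶠ[nhds a] (fun x => F2 (x, b)) := by
    intro a b hab
    have hopen : IsOpen {x : ℝ | (x, b) ∈ U} := hU.preimage (Continuous.prodMk_left b)
    filter_upwards [hopen.eventually_mem hab] with x hx using hdSS x b hx
  have hdSSS : ∀ a b : ℝ, (a, b) ∈ U → dS (dS (dS φ)) a b = F3 (a, b) := by
    intro a b hab
    have h1 : dS (dS (dS φ)) a b = deriv (fun x => F2 (x, b)) a :=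
      Filter.EventuallyEq.deriv_eq (hnearSS a b hab)
    rw [h1]
    exact (slice_fst (hF2diff _ hab)).deriv
  have hdTdS : ∀ a b : ℝ, (a, b) ∈ U → dT (dS φ) a b = fderiv ℝ F1 (a, b) (0, 1) := by
    intro a b hab
    have hopen : IsOpen {τ : ℝ | (a, τ) ∈ U} := hU.preimage (Continuous.prodMk_right a)
    have hev : (fun τ => dS φ a τ) =ᶠ[nhds b] (fun τ => F1 (a, τ)) := by
      filter_upwards [hopen.eventually_mem hab] with τ hτ using hdS a τ hτ
    have h1 : dT (dS φ) a b = deriv (fun τ => F1 (a, τ)) b :=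
      Filter.EventuallyEq.deriv_eq hev
    rw [h1]
    exact (slice_snd (hF1diff _ hab)).deriv
  -- Clairaut
  have hsymm : ∀ p ∈ U, fderiv ℝ F1 p (0, 1) = fderiv ℝ G1 p (1, 0) := by
    intro p hp
    have h1 : fderiv ℝ F1 p (0, 1) = fderiv ℝ (fderiv ℝ Φ) p (0, 1) (1, 0) :=
      fderiv_clm_apply_eq (hfddiff p hp) (1, 0) (0, 1)
    have h2 : fderiv ℝ G1 p (1, 0) = fderiv ℝ (fderiv ℝ Φ) p (1, 0) (0, 1) :=
      fderiv_clm_apply_eq (hfddiff p hp) (0, 1) (1, 0)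
    have hsym : IsSymmSndFDerivAt ℝ Φ p :=
      ((hsm p hp).of_le (by exact (WithTop.coe_le_coe.mpr le_top : ((2 : ℕ∞) : WithTop ℕ∞) ≤ ((⊤ : ℕ∞) : WithTop ℕ∞))) : ContDiffAt ℝ 2 Φ p).isSymmSndFDerivAt (by simp [minSmoothness_of_isRCLikeNormedField])
    rw [h1, h2, hsym.eq (0, 1) (1, 0)]
  -- derivative facts for eta, etaLog, sEta at points of Ioo 0 R
  have hEta : ∀ r' ∈ Set.Ioo (0:ℝ) R, HasDerivAt (eta κ m) (eta κ m r' * etaLog κ m r') r' :=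
    fun r' hr' => hasDerivAt_eta κ m hm (hsnpos r' hr').1 (hsnpos r' hr').2
  have hDerivEta : ∀ r' ∈ Set.Ioo (0:ℝ) R, deriv (eta κ m) r' = eta κ m r' * etaLog κ m r' :=
    fun r' hr' => (hEta r' hr').deriv
  -- heat equation rewritten
  have hheat' : ∀ r' ∈ Set.Ioo (0:ℝ) R,
      G1 (sEta κ m r', t)
        = eta κ m r' ^ 2 * F2 (sEta κ m r', t)
          + 2 * (m : ℝ) * (eta κ m r' * etaLog κ m r') * F1 (sEta κ m r', t) := by
    intro r' hr'
    have hq := hmem r' hr' t ht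
    have h := hheat r' hr' t ht
    rw [hdT _ _ hq, hdSS _ _ hq, hdS _ _ hq, hDerivEta r' hr'] at h
    exact h
  -- the point q
  have hqU := hmem r hr t ht
  have hE1 := (hsnpos r hr).1
  have hE2 := (hsnpos r hr).2
  have hEpos : 0 < eta κ m r := eta_pos κ m hE1 hE2
  have hseta : HasDerivAt (sEta κ m) (eta κ m r) r := hasDerivAt_sEta κ m hm r
  -- derivative of the LHS
  have hLHS : HasDerivAt (fun r' => G1 (sEta κ m r', t))
      (eta κ m r * fderiv ℝ G1 (sEta κ m r, t) (1, 0)) r :=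
    curve_deriv (hG1diff _ hqU) hseta
  -- derivatives of pieces of RHS
  have hF2c : HasDerivAt (fun r' => F2 (sEta κ m r', t))
      (eta κ m r * F3 (sEta κ m r, t)) r :=
    curve_deriv (hF2diff _ hqU) hseta
  have hF1c : HasDerivAt (fun r' => F1 (sEta κ m r', t))
      (eta κ m r * F2 (sEta κ m r, t)) r :=
    curve_deriv (hF1diff _ hqU) hseta
  have hEta_r := hEta r hr
  have hEtaLog_r := hasDerivAt_etaLog κ m hE1 hE2
  have hRHS := ((hEta_r.pow 2).mul hF2c).add
    (((hEta_r.mul hEtaLog_r).const_mul (2 * (m : ℝ))).mul hF1c)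
  -- the two functions agree near r
  have hev : (fun r' => G1 (sEta κ m r', t))
      =ᶠ[nhds r] (fun r' => eta κ m r' ^ 2 * F2 (sEta κ m r', t)
        + 2 * (m : ℝ) * (eta κ m r' * etaLog κ m r') * F1 (sEta κ m r', t)) := by
    filter_upwards [isOpen_Ioo.eventually_mem hr] with r' hr' using hheat' r' hr'
  have hLHS' := hRHS.congr_of_eventuallyEq hev
  have key := hLHS.unique hLHS'
  -- rewrite the goal
  rw [hdTdS _ _ hqU, hsymm _ hqU, hdSSS _ _ hqU, hdSS _ _ hqU, hdS _ _ hqU,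
    hDerivEta r hr, (hasDerivAt_sn κ r).deriv, (hasDerivAt_sn (4 * κ) r).deriv]
  -- final algebra
  apply mul_left_cancel₀ hEpos.ne'
  simp only [Pi.pow_apply, Pi.mul_apply] at key
  rw [key]
  simp only [etaLog]
  have h1m : (1:ℝ) ≤ (m:ℝ) := by exact_mod_cast hm
  have hn : 2 * (m:ℝ) - 1 ≠ 0 := by linarith
  generalize cs κ r / sn κ r = a
  generalize cs (4 * κ) r / sn (4 * κ) r = b
  generalize F1 (sEta κ m r, t) = y1
  generalize F2 (sEta κ m r, t) = y2
  generalize F3 (sEta κ m r, t) = y3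
  generalize eta κ m r = E0
  field_simp
  ring
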